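/- arXiv:0910.5765 — 3 statements merged into one kernel-verified Lean document; each statement's English description precedes it below -/
import Mathlib

section
/- For every real number α > −1, the integral ∫_{−1}^{1} arcsin(t) · t · (1 − t²)^α dt equals Γ(1/2)·Γ(α + 3/2) / ((2α + 2)·Γ(α + 2)). -/
open MeasureTheory Real Set intervalIntegral

/-!
Differentiating `arcsin t * (1 - t ^ 2) ^ (α + 1)`, which vanishes at `t = ±1`, gives
`(2 α + 2) ∫ arcsin t * t * (1 - t ^ 2) ^ α = ∫ (1 - t ^ 2) ^ (α + 1 / 2)` over `[-1, 1]`.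
The right-hand integrand is even, and on `[0, 1]` the substitution `t = √x` turns it into half the
beta integral `B(1 / 2, α + 3 / 2) = Γ(1 / 2) Γ(α + 3 / 2) / Γ(α + 2)`.
-/

lemma ofReal_rpow_mul_one_sub_rpow {x : ℝ} (hx : x ∈ Icc (0 : ℝ) 1) (a b : ℝ) :
    ((x ^ (a - 1) * (1 - x) ^ (b - 1) : ℝ) : ℂ) =
      (x : ℂ) ^ ((a : ℂ) - 1) * (1 - (x : ℂ)) ^ ((b : ℂ) - 1) := by
  rw [Complex.ofReal_mul, Complex.ofReal_cpow hx.1, Complex.ofReal_cpow (sub_nonneg.2 hx.2)]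
  norm_cast

lemma intervalIntegrable_rpow_mul_one_sub_rpow {a b : ℝ} (ha : 0 < a) (hb : 0 < b) :
    IntervalIntegrable (fun x ↦ x ^ (a - 1) * (1 - x) ^ (b - 1)) volume 0 1 := by
  have h := intervalIntegrable_iff.1 <|
    Complex.betaIntegral_convergent (u := a) (v := b) (by simpa) (by simpa)
  refine intervalIntegrable_iff.2 <|
    IntegrableOn.congr_fun h.re (fun x hx ↦ ?_) measurableSet_uIoc
  rw [uIoc_of_le zero_le_one] at hx
  rw [← ofReal_rpow_mul_one_sub_rpow (Ioc_subset_Icc_self hx), RCLike.re_to_complex,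
    Complex.ofReal_re]

lemma integral_rpow_mul_one_sub_rpow {a b : ℝ} (ha : 0 < a) (hb : 0 < b) :
    ∫ x in (0 : ℝ)..1, x ^ (a - 1) * (1 - x) ^ (b - 1) = Gamma a * Gamma b / Gamma (a + b) := by
  apply Complex.ofReal_injective
  rw [← integral_ofReal, integral_congr (fun x hx ↦ ofReal_rpow_mul_one_sub_rpow
      (by rwa [uIcc_of_le zero_le_one] at hx) a b), ← Complex.betaIntegral,
    Complex.betaIntegral_eq_Gamma_mul_div _ _ (by simpa) (by simpa), ← Complex.ofReal_add]
  simp only [Complex.Gamma_ofReal]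
  norm_cast

section SqrtSubstitution

variable {a b : ℝ} (ha : 0 ≤ a) (hb : 0 ≤ b) (g : ℝ → ℝ)
include ha hb

lemma hasDerivAt_sqrt_of_mem_Ioo {x : ℝ} (hx : x ∈ Ioo (min a b) (max a b)) :
    HasDerivAt (√·) (1 / (2 * √x)) x :=
  hasDerivAt_sqrt (lt_of_le_of_lt (le_min ha hb) hx.1).ne'

lemma integral_comp_sqrt_div :
    ∫ x in a..b, g (√x) / (2 * √x) = ∫ u in √a..√b, g u := by
  simpa only [Function.comp_def, ← div_eq_mul_one_div] using
    integral_comp_mul_deriv_of_deriv_nonneg (g := g) continuous_sqrt.continuousOn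
      (fun x hx ↦ hasDerivAt_sqrt_of_mem_Ioo ha hb hx) (fun x _ ↦ by positivity)

lemma intervalIntegrable_comp_sqrt_div_iff :
    IntervalIntegrable (fun x ↦ g (√x) / (2 * √x)) volume a b ↔
      IntervalIntegrable g volume √a √b := by
  simpa only [Function.comp_def, ← div_eq_mul_one_div] using
    integrable_comp_mul_deriv_iff_of_deriv_nonneg (g := g) continuous_sqrt.continuousOn
      (fun x hx ↦ hasDerivAt_sqrt_of_mem_Ioo ha hb hx) (fun x _ ↦ by positivity)

end SqrtSubstitution

section Even

variable {E : Type*} [NormedAddCommGroup E] {f : ℝ → E} (hf : f.Even) {a : ℝ}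
  (hint : IntervalIntegrable f volume 0 a)
include hf hint

lemma IntervalIntegrable.neg_zero_of_even : IntervalIntegrable f volume (-a) 0 := by
  simpa [hf.eq] using ((IntervalIntegrable.iff_comp_neg).mp hint).symm

lemma IntervalIntegrable.neg_self_of_even : IntervalIntegrable f volume (-a) a :=
  (hint.neg_zero_of_even hf).trans hint

lemma integral_neg_self_eq_two_smul_of_even [NormedSpace ℝ E] [CompleteSpace E] :
    ∫ x in -a..a, f x = (2 : ℝ) • ∫ x in 0..a, f x := by
  have hrefl : ∫ x in -a..0, f x = ∫ x in 0..a, f x := by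
    simpa [hf.eq] using (integral_comp_neg (a := 0) (b := a) f).symm
  rw [← integral_add_adjacent_intervals (hint.neg_zero_of_even hf) hint, hrefl, two_smul]

end Even

lemma eqOn_one_sub_sq_sqrt_rpow_div (s : ℝ) :
    EqOn (fun x ↦ (1 - √x ^ 2) ^ s / (2 * √x))
      (fun x ↦ 2⁻¹ * (x ^ ((1 / 2 : ℝ) - 1) * (1 - x) ^ (s + 1 - 1))) (uIoo 0 1) := by
  intro x hx
  rw [uIoo_of_le zero_le_one] at hx
  dsimp only
  have hsqrt : x ^ ((1 / 2 : ℝ) - 1) = (√x)⁻¹ := by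
    rw [show (1 / 2 : ℝ) - 1 = -(1 / 2) by norm_num, rpow_neg hx.1.le, sqrt_eq_rpow]
  rw [sq_sqrt hx.1.le, hsqrt, add_sub_cancel_right]
  field_simp

section OneSubSq

variable {s : ℝ} (hs : -1 < s)
include hs

lemma intervalIntegrable_one_sub_sq_rpow_zero_one :
    IntervalIntegrable (fun t : ℝ ↦ (1 - t ^ 2) ^ s) volume 0 1 := by
  have hbeta := (intervalIntegrable_rpow_mul_one_sub_rpow (a := 1 / 2) (b := s + 1) (by norm_num)
    (by linarith)).const_mul 2⁻¹
  simpa using (intervalIntegrable_comp_sqrt_div_iff le_rfl zero_le_one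
    (fun t ↦ (1 - t ^ 2) ^ s)).1 (hbeta.congr_uIoo (eqOn_one_sub_sq_sqrt_rpow_div s).symm)

lemma intervalIntegrable_one_sub_sq_rpow :
    IntervalIntegrable (fun t : ℝ ↦ (1 - t ^ 2) ^ s) volume (-1) 1 :=
  (intervalIntegrable_one_sub_sq_rpow_zero_one hs).neg_self_of_even fun x ↦ by simp

lemma integral_one_sub_sq_rpow_zero_one :
    ∫ t in (0 : ℝ)..1, (1 - t ^ 2) ^ s =
      2⁻¹ * (Gamma (1 / 2) * Gamma (s + 1) / Gamma (s + 3 / 2)) := by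
  have hsub := integral_comp_sqrt_div le_rfl zero_le_one (fun t ↦ (1 - t ^ 2) ^ s)
  rw [sqrt_zero, sqrt_one] at hsub
  rw [← hsub, integral_congr_uIoo (eqOn_one_sub_sq_sqrt_rpow_div s),
    intervalIntegral.integral_const_mul,
    integral_rpow_mul_one_sub_rpow (by norm_num) (by linarith),
    show (1 / 2 : ℝ) + (s + 1) = s + 3 / 2 by ring]

lemma integral_one_sub_sq_rpow :
    ∫ t in (-1 : ℝ)..1, (1 - t ^ 2) ^ s =
      Gamma (1 / 2) * Gamma (s + 1) / Gamma (s + 3 / 2) := by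
  rw [integral_neg_self_eq_two_smul_of_even (fun x ↦ by simp)
    (intervalIntegrable_one_sub_sq_rpow_zero_one hs), integral_one_sub_sq_rpow_zero_one hs,
    smul_eq_mul]
  ring

end OneSubSq

lemma hasDerivAt_arcsin_mul_one_sub_sq_rpow {s t : ℝ} (ht : t ∈ Ioo (-1 : ℝ) 1) :
    HasDerivAt (fun t ↦ arcsin t * (1 - t ^ 2) ^ (s + 1))
      ((1 - t ^ 2) ^ (s + 1 / 2) - 2 * (s + 1) * (arcsin t * t * (1 - t ^ 2) ^ s)) t := by
  have hpos : 0 < 1 - t ^ 2 := by nlinarith [ht.1, ht.2]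
  have hpow : HasDerivAt (fun t ↦ (1 - t ^ 2) ^ (s + 1))
      (-(2 * t * (s + 1) * (1 - t ^ 2) ^ s)) t := by
    simpa using ((hasDerivAt_pow 2 t).const_sub 1).rpow_const (p := s + 1) (Or.inl hpos.ne')
  have hhalf : (1 - t ^ 2) ^ (s + 1 / 2) = (1 - t ^ 2) ^ (s + 1) / √(1 - t ^ 2) := by
    rw [sqrt_eq_rpow, ← rpow_sub hpos]
    ring_nf
  refine ((hasDerivAt_arcsin ht.1.ne' ht.2.ne).mul hpow).congr_deriv ?_
  rw [hhalf]
  ring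

lemma intervalIntegrable_arcsin_mul_mul_one_sub_sq_rpow {s : ℝ} (hs : -1 < s) :
    IntervalIntegrable (fun t ↦ arcsin t * t * (1 - t ^ 2) ^ s) volume (-1) 1 :=
  (intervalIntegrable_one_sub_sq_rpow hs).continuousOn_mul (by fun_prop)

lemma two_mul_integral_arcsin_mul_mul_one_sub_sq_rpow {s : ℝ} (hs : -1 < s) :
    2 * (s + 1) * ∫ t in (-1 : ℝ)..1, arcsin t * t * (1 - t ^ 2) ^ s =
      ∫ t in (-1 : ℝ)..1, (1 - t ^ 2) ^ (s + 1 / 2) := by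
  have hcont : ContinuousOn (fun t ↦ arcsin t * (1 - t ^ 2) ^ (s + 1)) (Icc (-1) 1) :=
    (continuous_arcsin.mul ((continuous_const.sub (continuous_pow 2)).rpow_const
      fun _ ↦ Or.inr (by linarith))).continuousOn
  have hftc := integral_eq_sub_of_hasDerivAt_of_le (by norm_num) hcont
    (fun t ht ↦ hasDerivAt_arcsin_mul_one_sub_sq_rpow ht)
    ((intervalIntegrable_one_sub_sq_rpow (by linarith)).sub
      ((intervalIntegrable_arcsin_mul_mul_one_sub_sq_rpow hs).const_mul _))
  rw [integral_sub (intervalIntegrable_one_sub_sq_rpow (by linarith))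
    ((intervalIntegrable_arcsin_mul_mul_one_sub_sq_rpow hs).const_mul _),
    intervalIntegral.integral_const_mul] at hftc
  have hzero : (0 : ℝ) ^ (s + 1) = 0 := zero_rpow (by linarith)
  norm_num [hzero] at hftc
  linarith

theorem stmt5 (α : ℝ) (hα : -1 < α) :
    ∫ t in (-1 : ℝ)..1, Real.arcsin t * t * (1 - t ^ 2) ^ α =
      Real.Gamma (1 / 2) * Real.Gamma (α + 3 / 2) /
        ((2 * α + 2) * Real.Gamma (α + 2)) := by
  have h := two_mul_integral_arcsin_mul_mul_one_sub_sq_rpow hα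
  rw [integral_one_sub_sq_rpow (by linarith : -1 < α + 1 / 2),
    show α + 1 / 2 + 1 = α + 3 / 2 by ring, show α + 1 / 2 + 3 / 2 = α + 2 by ring,
    eq_div_iff (Gamma_pos_of_pos (by linarith)).ne'] at h
  rw [eq_div_iff (mul_pos (by linarith) (Gamma_pos_of_pos (by linarith))).ne']
  linear_combination h
end

section
/- Let n and m be positive integers, and let u, v, u', v' be unit vectors in ℝ^m with u · v = u' · v'. Let X be an n×m random matrix whose entries are independent standard normal random variables, and define E_n(u, v) = E[ ((X u)/‖X u‖) · ((X v)/‖X v‖) ]. Then E_n(u, v) = E_n(u', v'), i.e., E_n(u,v) depends only on the inner product u · v. -/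
/-!
The standard Gaussian measure on `ℝ^m` is invariant under every linear isometry, hence so is the
law of `X` under `X ↦ X Q` for `Q` orthogonal, acting row by row. Since `(X Q) u = X (Q u)`, this
gives `E_n(u, v) = E_n(Q u, Q v)`, and two reflections produce an orthogonal `Q` with `Q u = u'` and
`Q v = v'` as soon as `‖u‖ = ‖u'‖`, `‖v‖ = ‖v'‖` and `u · v = u' · v'`.
-/

open scoped BigOperators
open MeasureTheory ProbabilityTheory

/-- The law of an `n × m` random matrix with independent standard normal entries. -/
noncomputable def gaussNM (n m : ℕ) : Measure (Fin n → Fin m → ℝ) :=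
  Measure.pi fun _ => Measure.pi fun _ => gaussianReal 0 1

/-- Matrix-vector multiplication `X u`. -/
noncomputable def nmul {n m : ℕ} (X : Fin n → Fin m → ℝ) (u : Fin m → ℝ) : Fin n → ℝ :=
  fun k => ∑ l, X k l * u l

/-- Euclidean norm of a vector in `ℝ^n`. -/
noncomputable def nnorm {n : ℕ} (v : Fin n → ℝ) : ℝ :=
  Real.sqrt (∑ k, v k ^ 2)

/-- `En n m u v = E[ (Xu/‖Xu‖) · (Xv/‖Xv‖) ]` for a random `n × m` matrix `X`
with independent standard normal entries. -/
noncomputable def En (n m : ℕ) (u v : Fin m → ℝ) : ℝ :=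
  ∫ X, (∑ k, (nmul X u k / nnorm (nmul X u)) * (nmul X v k / nnorm (nmul X v)))
    ∂(gaussNM n m)

open scoped RealInnerProductSpace
open WithLp

theorem exists_linearIsometryEquiv_map_pair {F : Type*} [NormedAddCommGroup F]
    [InnerProductSpace ℝ F] {u v u' v' : F} (hu : ‖u‖ = ‖u'‖) (hv : ‖v‖ = ‖v'‖)
    (huv : ⟪u, v⟫ = ⟪u', v'⟫) : ∃ e : F ≃ₗᵢ[ℝ] F, e u = u' ∧ e v = v' := by
  -- The second reflection fixes `u'` because `r v - v'` is orthogonal to `u'`.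
  set r := Submodule.reflection (ℝ ∙ (u - u'))ᗮ
  have hru : r u = u' := Submodule.reflection_sub hu
  set s := Submodule.reflection (ℝ ∙ (r v - v'))ᗮ
  have hsu : s u' = u' := by
    apply Submodule.reflection_mem_subspace_eq_self
    rw [Submodule.mem_orthogonal_singleton_iff_inner_right, inner_sub_left, sub_eq_zero, ← hru,
      r.inner_map_map, hru, real_inner_comm, huv, real_inner_comm]
  have hsv : s (r v) = v' := Submodule.reflection_sub (by rw [r.norm_map, hv])
  exact ⟨r.trans s, by simp [hru, hsu], by simp [hsv]⟩

section

variable {ι : Type*} [Fintype ι]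

noncomputable def LinearIsometryEquiv.piMeasurableEquiv
    (e : EuclideanSpace ℝ ι ≃ₗᵢ[ℝ] EuclideanSpace ℝ ι) : (ι → ℝ) ≃ᵐ (ι → ℝ) :=
  ((MeasurableEquiv.toLp 2 (ι → ℝ)).trans e.toMeasurableEquiv).trans
    (MeasurableEquiv.toLp 2 (ι → ℝ)).symm

theorem LinearIsometryEquiv.piMeasurableEquiv_apply
    (e : EuclideanSpace ℝ ι ≃ₗᵢ[ℝ] EuclideanSpace ℝ ι) (x : ι → ℝ) :
    e.piMeasurableEquiv x = ofLp (e (toLp 2 x)) := rfl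

theorem LinearIsometryEquiv.measurePreserving_piMeasurableEquiv
    (e : EuclideanSpace ℝ ι ≃ₗᵢ[ℝ] EuclideanSpace ℝ ι) :
    MeasurePreserving e.piMeasurableEquiv (Measure.pi fun _ => gaussianReal 0 1)
      (Measure.pi fun _ => gaussianReal 0 1) := by
  have hLp : MeasurePreserving (MeasurableEquiv.toLp 2 (ι → ℝ))
      (Measure.pi fun _ => gaussianReal 0 1) (stdGaussian (EuclideanSpace ℝ ι)) :=
    ⟨(MeasurableEquiv.toLp 2 (ι → ℝ)).measurable, map_pi_eq_stdGaussian⟩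
  have he : MeasurePreserving e (stdGaussian _) (stdGaussian _) :=
    ⟨e.continuous.measurable, stdGaussian_map e⟩
  exact hLp.symm.comp (he.comp hLp)

end

theorem nmul_piMeasurableEquiv {n m : ℕ}
    (e : EuclideanSpace ℝ (Fin m) ≃ₗᵢ[ℝ] EuclideanSpace ℝ (Fin m))
    (X : Fin n → Fin m → ℝ) (u : Fin m → ℝ) :
    nmul (fun k => e.piMeasurableEquiv (X k)) u = nmul X (e.symm.piMeasurableEquiv u) := by
  funext k
  have := e.inner_map_map (toLp 2 (X k)) (e.symm (toLp 2 u))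
  simp only [LinearIsometryEquiv.apply_symm_apply, PiLp.inner_apply] at this
  simpa [nmul, LinearIsometryEquiv.piMeasurableEquiv_apply, mul_comm] using this

theorem En_piMeasurableEquiv (n : ℕ) {m : ℕ}
    (e : EuclideanSpace ℝ (Fin m) ≃ₗᵢ[ℝ] EuclideanSpace ℝ (Fin m)) (u v : Fin m → ℝ) :
    En n m (e.piMeasurableEquiv u) (e.piMeasurableEquiv v) = En n m u v := by
  let T := MeasurableEquiv.piCongrRight fun _ : Fin n => e.symm.piMeasurableEquiv
  have hT : MeasurePreserving T (gaussNM n m) (gaussNM n m) :=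
    measurePreserving_pi _ _ fun _ => e.symm.measurePreserving_piMeasurableEquiv
  have hTX (X : Fin n → Fin m → ℝ) : T X = fun k => e.symm.piMeasurableEquiv (X k) := rfl
  symm
  rw [En, En, ← hT.integral_comp']
  simp only [hTX, nmul_piMeasurableEquiv, LinearIsometryEquiv.symm_symm]

theorem stmt12_general (n m : ℕ)
    (u v u' v' : Fin m → ℝ)
    (hu : ∑ k, u k ^ 2 = 1) (hv : ∑ k, v k ^ 2 = 1)
    (hu' : ∑ k, u' k ^ 2 = 1) (hv' : ∑ k, v' k ^ 2 = 1)
    (hdot : ∑ k, u k * v k = ∑ k, u' k * v' k) :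
    En n m u v = En n m u' v' := by
  have hnorm (w : Fin m → ℝ) : ‖toLp 2 w‖ = √(∑ k, w k ^ 2) := by
    simp [EuclideanSpace.norm_eq]
  obtain ⟨e, heu, hev⟩ := exists_linearIsometryEquiv_map_pair (u := toLp 2 u) (v := toLp 2 v)
    (u' := toLp 2 u') (v' := toLp 2 v') (by rw [hnorm, hnorm, hu, hu'])
    (by rw [hnorm, hnorm, hv, hv']) (by simpa [PiLp.inner_apply, mul_comm] using hdot)
  rw [← En_piMeasurableEquiv n e, e.piMeasurableEquiv_apply, e.piMeasurableEquiv_apply, heu, hev]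

theorem stmt12 (n m : ℕ) (hn : 0 < n) (hm : 0 < m)
    (u v u' v' : Fin m → ℝ)
    (hu : ∑ k, u k ^ 2 = 1) (hv : ∑ k, v k ^ 2 = 1)
    (hu' : ∑ k, u' k ^ 2 = 1) (hv' : ∑ k, v' k ^ 2 = 1)
    (hdot : ∑ k, u k * v k = ∑ k, u' k * v' k) :
    En n m u v = En n m u' v' :=
  stmt12_general n m u v u' v' hu hv hu' hv' hdot
end

section
/- Let m be a positive integer and let A be an m×m real symmetric matrix such that A_{ij} ≤ 0 whenever i ≠ j and ∑_{i=1}^m A_{ij} = 0 for every j. Let v be a real number and let E : [−1, 1] → ℝ be a function with E(1) = 1 such that 1 − E(t) ≥ v·(1 − t) for all t ∈ [−1, 1]. Then for all unit vectors u_1, …, u_m in ℝ^m, ∑_{i=1}^m ∑_{j=1}^m A_{ij} E(u_i · u_j) ≥ v · ∑_{i=1}^m ∑_{j=1}^m A_{ij} (u_i · u_j). -/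
open scoped BigOperators

open Finset

theorem sum_mul_mem_Icc_of_sum_sq_eq_one {ι : Type*} [Fintype ι] {x y : ι → ℝ}
    (hx : ∑ k, x k ^ 2 = 1) (hy : ∑ k, y k ^ 2 = 1) :
    ∑ k, x k * y k ∈ Set.Icc (-1 : ℝ) 1 := by
  have hsq : (∑ k, x k * y k) ^ 2 ≤ 1 := by
    simpa [hx, hy] using sum_mul_sq_le_sq_mul_sq univ x y
  exact abs_le.mp (sq_le_one_iff_abs_le_one _ |>.mp hsq)

/-- Zero column sums let us subtract the diagonal value `c` from every entry of `s`; each term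
`A i j * (s i j - c)` is then a product of two nonpositive numbers off the diagonal. -/
theorem Matrix.sum_mul_nonneg_of_le_diag {ι : Type*} [Fintype ι] {A : Matrix ι ι ℝ}
    (hoff : ∀ i j, i ≠ j → A i j ≤ 0) (hcol : ∀ j, ∑ i, A i j = 0)
    {s : ι → ι → ℝ} {c : ℝ} (hdiag : ∀ i, s i i = c) (hle : ∀ i j, s i j ≤ c) :
    0 ≤ ∑ i, ∑ j, A i j * s i j := by
  have hshift : ∑ i, ∑ j, A i j * s i j = ∑ i, ∑ j, A i j * (s i j - c) := by
    have hconst : ∑ i, ∑ j, A i j * c = 0 := by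
      rw [sum_comm]
      simp only [← sum_mul, hcol, zero_mul, sum_const_zero]
    simp only [mul_sub, sum_sub_distrib, hconst, sub_zero]
  rw [hshift]
  refine sum_nonneg fun i _ => sum_nonneg fun j _ => ?_
  rcases eq_or_ne i j with rfl | hij
  · simp [hdiag]
  · exact mul_nonneg_of_nonpos_of_nonpos (hoff i j hij) (sub_nonpos.mpr (hle i j))

theorem stmt15_general (m : ℕ)
    (A : Matrix (Fin m) (Fin m) ℝ)
    (hoff : ∀ i j, i ≠ j → A i j ≤ 0)
    (hcol : ∀ j, ∑ i, A i j = 0)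
    (v : ℝ) (E : ℝ → ℝ) (hE1 : E 1 = 1)
    (hE : ∀ t ∈ Set.Icc (-1 : ℝ) 1, 1 - E t ≥ v * (1 - t))
    (u : Fin m → Fin m → ℝ) (hu : ∀ i, ∑ k, u i k ^ 2 = 1) :
    ∑ i, ∑ j, A i j * E (∑ k, u i k * u j k) ≥
      v * ∑ i, ∑ j, A i j * (∑ k, u i k * u j k) := by
  set t : Fin m → Fin m → ℝ := fun i j => ∑ k, u i k * u j k
  have hdiag : ∀ i, E (t i i) - v * t i i = 1 - v := fun i => by
    simp only [t, ← sq, hu, hE1, mul_one]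
  have hle : ∀ i j, E (t i j) - v * t i j ≤ 1 - v := fun i j => by
    linarith [hE _ (sum_mul_mem_Icc_of_sum_sq_eq_one (hu i) (hu j))]
  have key := Matrix.sum_mul_nonneg_of_le_diag hoff hcol hdiag hle
  simp only [mul_sub, sum_sub_distrib, mul_left_comm _ v, ← mul_sum] at key
  exact sub_nonneg.mp key

theorem stmt15 (m : ℕ) (hm : 0 < m)
    (A : Matrix (Fin m) (Fin m) ℝ) (hsym : A.IsSymm)
    (hoff : ∀ i j, i ≠ j → A i j ≤ 0)
    (hcol : ∀ j, ∑ i, A i j = 0)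
    (v : ℝ) (E : ℝ → ℝ) (hE1 : E 1 = 1)
    (hE : ∀ t ∈ Set.Icc (-1 : ℝ) 1, 1 - E t ≥ v * (1 - t))
    (u : Fin m → Fin m → ℝ) (hu : ∀ i, ∑ k, u i k ^ 2 = 1) :
    ∑ i, ∑ j, A i j * E (∑ k, u i k * u j k) ≥
      v * ∑ i, ∑ j, A i j * (∑ k, u i k * u j k) :=
  stmt15_general m A hoff hcol v E hE1 hE u hu
end
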